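/- arXiv:1608.02455 — 3 statements merged into one kernel-verified Lean document; each statement's English description precedes it below -/
import Mathlib

section
/- Let $f(z)=\sum_{k=1}^\infty a_k z^{n_k}$ be a power series with all $a_k\neq 0$ and strictly increasing exponents satisfying $n_{k+1}>n_k^2$ for all $k\ge 1$. Fix $l\ge 1$ and integers $m,j$ with $0\le m,j\le n_{l+1}-1$. Then the power series $z^m f(z)^j$ contains the monomial $(a_{l+1})^j z^{jn_{l+1}+m}$ with nonzero coefficient, and has no other nonzero monomial of degree strictly between $jn_{l+1}+m$ and $n_{l+2}$. -/
/-!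
Let `N = n (l+1)` and `B = n (l+2)`. Below degree `B` the series `f` agrees with the polynomial
`trunc B f`, which by lacunarity has degree at most `N` and leading coefficient `a (l+1)`. Hence
below degree `B` the power `f ^ j` agrees with a polynomial of degree at most `j * N` whose
coefficient in degree `j * N` is `a (l+1) ^ j`, and `j * N < N ^ 2 < B`.
-/

namespace PowerSeries

variable {R : Type*} [CommSemiring R] {f : R⟦X⟧} {N B : ℕ}

theorem coeff_pow_eq_coeff_trunc_pow {d : ℕ} (hd : d < B) (j : ℕ) :
    coeff d (f ^ j) = ((trunc B f) ^ j).coeff d := by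
  rw [← coeff_coe_trunc_of_lt hd, ← trunc_trunc_pow, coeff_coe_trunc_of_lt hd,
    ← Polynomial.coe_pow, Polynomial.coeff_coe]

theorem natDegree_trunc_le_of_coeff_eq_zero (hf : ∀ q, N < q → q < B → coeff q f = 0) :
    (trunc B f).natDegree ≤ N := by
  rw [Polynomial.natDegree_le_iff_coeff_eq_zero]
  intro q hq
  rw [coeff_trunc]
  split_ifs with hqB
  · exact hf q hq hqB
  · rfl

theorem coeff_pow_mul_eq_of_coeff_eq_zero (hf : ∀ q, N < q → q < B → coeff q f = 0) {j : ℕ}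
    (hj : j * N < B) : coeff (j * N) (f ^ j) = coeff N f ^ j := by
  rcases Nat.eq_zero_or_pos j with rfl | hj0
  · simp
  have hN : N < B := (Nat.le_mul_of_pos_left N hj0).trans_lt hj
  rw [coeff_pow_eq_coeff_trunc_pow hj,
    Polynomial.coeff_pow_of_natDegree_le (natDegree_trunc_le_of_coeff_eq_zero hf), coeff_trunc,
    if_pos hN]

theorem coeff_pow_eq_zero_of_coeff_eq_zero (hf : ∀ q, N < q → q < B → coeff q f = 0)
    {j d : ℕ}
    (hd : j * N < d) (hdB : d < B) : coeff d (f ^ j) = 0 := by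
  rw [coeff_pow_eq_coeff_trunc_pow hdB]
  exact Polynomial.coeff_eq_zero_of_natDegree_lt
    ((Polynomial.natDegree_pow_le_of_le j (natDegree_trunc_le_of_coeff_eq_zero hf)).trans_lt hd)

theorem coeff_eq_zero_of_lacunary {n : ℕ → ℕ} (hn : StrictMono fun k => n (k + 1))
    (hf : ∀ i, (∀ k ≥ 1, n k ≠ i) → coeff i f = 0) (l : ℕ) :
    ∀ q, n (l + 1) < q → q < n (l + 2) → coeff q f = 0 := by
  intro q hlow hhigh
  refine hf q fun k hk hkq => ?_
  obtain ⟨k, rfl⟩ := Nat.exists_eq_add_of_le' hk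
  subst hkq
  have h₁ : l < k := hn.lt_iff_lt.mp hlow
  have h₂ : k < l + 1 := hn.lt_iff_lt.mp hhigh
  omega

end PowerSeries

theorem stmt5_general (a : ℕ → ℂ) (n : ℕ → ℕ)
    (ha : ∀ k ≥ 1, a k ≠ 0) (hn : ∀ k ≥ 1, (n k) ^ 2 < n (k + 1))
    (f : PowerSeries ℂ)
    (hf1 : ∀ k ≥ 1, PowerSeries.coeff (n k) f = a k)
    (hf2 : ∀ i : ℕ, (∀ k ≥ 1, n k ≠ i) → PowerSeries.coeff i f = 0)
    (l : ℕ) (m j : ℕ) (hj : j < n (l + 1)) :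
    PowerSeries.coeff (j * n (l + 1) + m) (PowerSeries.X ^ m * f ^ j)
        = (a (l + 1)) ^ j ∧
      (a (l + 1)) ^ j ≠ 0 ∧
      ∀ i : ℕ, j * n (l + 1) + m < i → i < n (l + 2) →
        PowerSeries.coeff i (PowerSeries.X ^ m * f ^ j) = 0 := by
  have hmono : StrictMono fun k => n (k + 1) := strictMono_nat_of_lt_succ fun k =>
    (Nat.le_self_pow two_ne_zero _).trans_lt (hn (k + 1) k.succ_pos)
  have gap := PowerSeries.coeff_eq_zero_of_lacunary hmono hf2 l
  have hjN : j * n (l + 1) < n (l + 2) :=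
    calc j * n (l + 1) ≤ n (l + 1) ^ 2 := by rw [sq]; exact Nat.mul_le_mul_right _ hj.le
      _ < n (l + 2) := hn (l + 1) l.succ_pos
  refine ⟨?_, pow_ne_zero _ (ha _ l.succ_pos), fun i hi hiB => ?_⟩
  · rw [PowerSeries.coeff_X_pow_mul, PowerSeries.coeff_pow_mul_eq_of_coeff_eq_zero gap hjN,
      hf1 _ l.succ_pos]
  · rw [PowerSeries.coeff_X_pow_mul', if_pos (by omega)]
    exact PowerSeries.coeff_pow_eq_zero_of_coeff_eq_zero gap (by omega) (by omega)

/-- Lacunary structure lemma: if `f(z) = ∑_{k≥1} a_k z^{n_k}` with `a_k ≠ 0` and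
`n_{k+1} > n_k²`, then for `0 ≤ m, j ≤ n_{l+1} - 1` the series `z^m f^j` has the
monomial `(a_{l+1})^j z^{j n_{l+1} + m}` and no other nonzero monomial of degree
strictly between `j n_{l+1} + m` and `n_{l+2}`. -/
theorem stmt5 (a : ℕ → ℂ) (n : ℕ → ℕ)
    (ha : ∀ k ≥ 1, a k ≠ 0) (hn : ∀ k ≥ 1, (n k) ^ 2 < n (k + 1))
    (f : PowerSeries ℂ)
    (hf1 : ∀ k ≥ 1, PowerSeries.coeff (n k) f = a k)
    (hf2 : ∀ i : ℕ, (∀ k ≥ 1, n k ≠ i) → PowerSeries.coeff i f = 0)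
    (l : ℕ) (hl : 1 ≤ l) (m j : ℕ) (hm : m < n (l + 1)) (hj : j < n (l + 1)) :
    PowerSeries.coeff (j * n (l + 1) + m) (PowerSeries.X ^ m * f ^ j)
        = (a (l + 1)) ^ j ∧
      (a (l + 1)) ^ j ≠ 0 ∧
      ∀ i : ℕ, j * n (l + 1) + m < i → i < n (l + 2) →
        PowerSeries.coeff i (PowerSeries.X ^ m * f ^ j) = 0 :=
  stmt5_general a n ha hn f hf1 hf2 l m j hj
end

section
/- Let $f(z)=\sum_{k=1}^\infty a_k z^{n_k}$ with all $a_k\neq 0$ and $n_{k+1}>n_k^2$ for all $k\ge 1$. For $d\ge 1$, define the $d$-th transcendence index $\nu_d$ of $f$ as the maximal order of vanishing at $0$ of $P(z,f(z))$ over all nonzero polynomials $P\in\mathbb{C}[X,Y]$ of total degree at most $d$. Then for every $l\ge 1$ and every $d$ with $n_l\le d\le n_{l+1}-1$, one has $n_{l+1}\le \nu_d\le n_{l+1}^2-1<n_{l+2}$. -/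
/-!
Put `N = n (l + 1)`. Below `X ^ n (l + 2)`, and `n (l + 2) > N ^ 2`, the series `f` is a
polynomial of degree at most `n l < N` plus `a (l + 1) X ^ N`. So below that degree `f ^ t` has
coefficient `a (l + 1) ^ t` at `t N`, and its other nonzero coefficients sit at most at
`(t - 1) N + n l`. For `P` of total degree `< N`, the weight `u 1 * N + u 0` separates the
monomials `X ^ (u 0) Y ^ (u 1)`, and the one of largest weight gives a coefficient of `P(X, f)`
below `N ^ 2` that cannot cancel. Conversely `Y` minus the truncation of `f` at degree `n l` has
order exactly `N`.
-/

open PowerSeries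

lemma strictMonoOn_Ici_one_of_sq_lt {n : ℕ → ℕ} (hn : ∀ k ≥ 1, n k ^ 2 < n (k + 1)) :
    StrictMonoOn n (Set.Ici 1) :=
  strictMonoOn_Ici_of_pred_lt fun m hm => by
    obtain ⟨k, rfl⟩ := Nat.exists_eq_add_of_lt hm
    rw [Order.pred_eq_sub_one, show 1 + k + 1 - 1 = 1 + k by omega]
    exact (Nat.le_self_pow two_ne_zero _).trans_lt (hn _ (by omega))

lemma Finsupp.eq_of_mul_add_eq_of_lt_fin_two {N : ℕ} {u v : Fin 2 →₀ ℕ} (hu : u 0 < N)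
    (hv : v 0 < N) (h : u 1 * N + u 0 = v 1 * N + v 0) : u = v := by
  have hN : 0 < N := by omega
  have h0 : u 0 = v 0 := by
    simpa [Nat.mul_comm, Nat.mul_add_mod, Nat.mod_eq_of_lt hu, Nat.mod_eq_of_lt hv] using
      congrArg (· % N) h
  have h1 : u 1 = v 1 := by
    simpa [Nat.mul_comm, Nat.mul_add_div hN, Nat.div_eq_of_lt hu, Nat.div_eq_of_lt hv] using
      congrArg (· / N) h
  ext i
  fin_cases i <;> assumption

section Gap

variable {R : Type*} [CommSemiring R] {f : R⟦X⟧} {m N M : ℕ}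

theorem coeff_pow_ne_zero_of_gap (hgap : ∀ i, coeff i f ≠ 0 → i ≤ m ∨ i = N ∨ M ≤ i)
    (hmN : m < N) (t : ℕ) {j : ℕ} (hj : j < M) (h : coeff j (f ^ t) ≠ 0) :
    j = t * N ∨ j + N ≤ t * N + m := by
  induction t generalizing j with
  | zero =>
    rw [pow_zero, coeff_one] at h
    exact .inl (by rw [zero_mul]; by_contra h0; exact h (if_neg h0))
  | succ t ih =>
    rw [pow_succ', coeff_mul] at h
    obtain ⟨⟨p, q⟩, hpq, hne⟩ := Finset.exists_ne_zero_of_sum_ne_zero h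
    rw [Finset.HasAntidiagonal.mem_antidiagonal] at hpq
    have hp := hgap p (left_ne_zero_of_mul hne)
    have hq := ih (by omega) (right_ne_zero_of_mul hne)
    rw [add_one_mul]
    omega

theorem coeff_mul_pow_of_gap (hgap : ∀ i, coeff i f ≠ 0 → i ≤ m ∨ i = N ∨ M ≤ i)
    (hmN : m < N) {t : ℕ} (ht : t * N < M) : coeff (t * N) (f ^ t) = coeff N f ^ t := by
  induction t with
  | zero => simp
  | succ t ih =>
    rw [add_one_mul] at ht ⊢
    rw [pow_succ', coeff_mul, Finset.sum_eq_single_of_mem (N, t * N)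
      (Finset.HasAntidiagonal.mem_antidiagonal.2 (add_comm _ _)), ih (by omega), pow_succ']
    rintro ⟨p, q⟩ hpq hne
    rw [Finset.HasAntidiagonal.mem_antidiagonal] at hpq
    by_contra h
    have hp := hgap p (left_ne_zero_of_mul h)
    have hq := coeff_pow_ne_zero_of_gap hgap hmN t (j := q) (by omega) (right_ne_zero_of_mul h)
    have : p ≠ N := fun hpN => hne (by simp only [Prod.mk.injEq]; omega)
    omega

end Gap

section Evaluation

variable {R : Type*} [CommSemiring R]

theorem coeff_aeval_X_pair (f : R⟦X⟧) (P : MvPolynomial (Fin 2) R) (j : ℕ) :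
    coeff j (MvPolynomial.aeval ![X, f] P) =
      ∑ u ∈ P.support, P.coeff u * if u 0 ≤ j then coeff (j - u 0) (f ^ u 1) else 0 := by
  rw [MvPolynomial.aeval_def, MvPolynomial.eval₂_eq', map_sum]
  refine Finset.sum_congr rfl fun u _ => ?_
  rw [Fin.prod_univ_two, Matrix.cons_val_zero, Matrix.cons_val_one, Matrix.cons_val_zero,
    ← C_eq_algebraMap, coeff_C_mul, coeff_X_pow_mul']

theorem add_lt_of_mem_support_of_totalDegree_lt {P : MvPolynomial (Fin 2) R} {N : ℕ}
    (hdeg : P.totalDegree < N) {u : Fin 2 →₀ ℕ} (hu : u ∈ P.support) : u 0 + u 1 < N := by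
  have := MvPolynomial.le_totalDegree hu
  rw [Finsupp.sum_fintype _ _ fun _ => rfl, Fin.sum_univ_two] at this
  omega

variable [NoZeroDivisors R] {f : R⟦X⟧} {m N M : ℕ}

theorem order_aeval_lt_sq (hgap : ∀ i, coeff i f ≠ 0 → i ≤ m ∨ i = N ∨ M ≤ i)
    (hmN : m < N) (hM : N ^ 2 ≤ M) (hc : coeff N f ≠ 0) {P : MvPolynomial (Fin 2) R}
    (hP : P ≠ 0) (hdeg : P.totalDegree < N) :
    (MvPolynomial.aeval ![X, f] P).order < (N ^ 2 : ℕ) := by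
  classical
  have hsmall := fun u (hu : u ∈ P.support) => add_lt_of_mem_support_of_totalDegree_lt hdeg hu
  obtain ⟨v, hv, hvmax⟩ :=
    P.support.exists_max_image (fun u => u 1 * N + u 0) (MvPolynomial.support_nonempty.2 hP)
  have hvN : v 1 * N + v 0 < N ^ 2 := by
    have := hsmall v hv
    nlinarith
  have hcoeff : coeff (v 1 * N + v 0) (MvPolynomial.aeval ![X, f] P) =
      P.coeff v * coeff N f ^ v 1 := by
    rw [coeff_aeval_X_pair, Finset.sum_eq_single_of_mem v hv, if_pos (by omega),
      Nat.add_sub_cancel, coeff_mul_pow_of_gap hgap hmN (by omega)]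
    intro u hu hne
    have hlt : u 1 * N + u 0 < v 1 * N + v 0 := (hvmax u hu).lt_of_ne fun h =>
      hne (Finsupp.eq_of_mul_add_eq_of_lt_fin_two (by have := hsmall u hu; omega)
        (by have := hsmall v hv; omega) h)
    split_ifs with h0
    · refine mul_eq_zero_of_right _ (by_contra fun hne0 => ?_)
      have := coeff_pow_ne_zero_of_gap hgap hmN (u 1) (by omega) hne0
      omega
    · exact mul_zero _
  calc (MvPolynomial.aeval ![X, f] P).order ≤ (v 1 * N + v 0 : ℕ) := by
        refine order_le _ ?_
        rw [hcoeff]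
        exact mul_ne_zero (MvPolynomial.mem_support_iff.1 hv) (pow_ne_zero _ hc)
    _ < (N ^ 2 : ℕ) := by exact_mod_cast hvN

end Evaluation

theorem exists_order_aeval_eq_of_gap {R : Type*} [CommRing R] {f : R⟦X⟧} {m N M : ℕ}
    (hgap : ∀ i, coeff i f ≠ 0 → i ≤ m ∨ i = N ∨ M ≤ i) (hmN : m < N) (hNM : N ≤ M)
    (hc : coeff N f ≠ 0) :
    ∃ Q : MvPolynomial (Fin 2) R, Q ≠ 0 ∧ Q.totalDegree ≤ max 1 m ∧
      (MvPolynomial.aeval ![X, f] Q).order = N := by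
  classical
  set Q : MvPolynomial (Fin 2) R := MvPolynomial.X 1 -
    ∑ i ∈ Finset.range (m + 1), MvPolynomial.C (coeff i f) * MvPolynomial.X 0 ^ i
  have hcoeffQ : ∀ j,
      coeff j (MvPolynomial.aeval ![X, f] Q) = if j < m + 1 then 0 else coeff j f := by
    intro j
    simp only [Q, map_sub, map_sum, map_mul, map_pow, MvPolynomial.aeval_X, MvPolynomial.aeval_C,
      Matrix.cons_val_zero, Matrix.cons_val_one, ← C_eq_algebraMap, coeff_C_mul_X_pow,
      Finset.sum_ite_eq, Finset.mem_range]
    split_ifs <;> simp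
  have hord : (MvPolynomial.aeval ![X, f] Q).order = N := by
    rw [order_eq_nat, hcoeffQ, if_neg (by omega)]
    refine ⟨hc, fun i hi => ?_⟩
    rw [hcoeffQ]
    split_ifs with him
    · rfl
    · by_contra h
      have := hgap i h
      omega
  have : Nontrivial R := nontrivial_of_ne _ _ hc
  refine ⟨Q, fun h => by simp [h] at hord, ?_, hord⟩
  refine (MvPolynomial.totalDegree_sub _ _).trans
    (max_le_max (MvPolynomial.totalDegree_X _).le ?_)
  refine (MvPolynomial.totalDegree_finsetSum _ _).trans (Finset.sup_le fun i hi => ?_)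
  refine (MvPolynomial.totalDegree_mul _ _).trans ?_
  rw [MvPolynomial.totalDegree_C, MvPolynomial.totalDegree_X_pow, zero_add]
  exact Nat.lt_succ_iff.1 (Finset.mem_range.1 hi)

theorem coeff_ne_zero_gap_of_lacunary {R : Type*} [Semiring R] {f : R⟦X⟧} {n : ℕ → ℕ}
    (hmono : StrictMonoOn n (Set.Ici 1)) (hf : ∀ i, (∀ k ≥ 1, n k ≠ i) → coeff i f = 0)
    (l : ℕ) : ∀ i, coeff i f ≠ 0 → i ≤ n l ∨ i = n (l + 1) ∨ n (l + 2) ≤ i := by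
  intro i hi
  obtain ⟨k, hk, rfl⟩ : ∃ k ≥ 1, n k = i := by
    by_contra! h
    exact hi (hf i h)
  rcases lt_trichotomy k (l + 1) with hkl | rfl | hkl
  · exact .inl (hmono.monotoneOn hk (show 1 ≤ l by omega) (by omega))
  · exact .inr (.inl rfl)
  · exact .inr (.inr (hmono.monotoneOn (show 1 ≤ l + 2 by omega) hk (by omega)))

/-- Two-sided bound on the transcendence index `ν_d` of a lacunary series:
for `n_l ≤ d ≤ n_{l+1} - 1`, one has `n_{l+1} ≤ ν_d ≤ n_{l+1}² - 1 < n_{l+2}`. -/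
theorem stmt6 (a : ℕ → ℂ) (n : ℕ → ℕ)
    (ha : ∀ k ≥ 1, a k ≠ 0) (hn : ∀ k ≥ 1, (n k) ^ 2 < n (k + 1))
    (f : PowerSeries ℂ)
    (hf1 : ∀ k ≥ 1, PowerSeries.coeff (n k) f = a k)
    (hf2 : ∀ i : ℕ, (∀ k ≥ 1, n k ≠ i) → PowerSeries.coeff i f = 0)
    (l : ℕ) (hl : 1 ≤ l) (d : ℕ) (hd : 1 ≤ d)
    (hd1 : n l ≤ d) (hd2 : d + 1 ≤ n (l + 1))
    (ν : ℕ)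
    (hν : IsGreatest {k : ℕ | ∃ P : MvPolynomial (Fin 2) ℂ, P ≠ 0 ∧
      P.totalDegree ≤ d ∧
      (MvPolynomial.aeval ![PowerSeries.X, f] P).order = (k : ℕ)} ν) :
    n (l + 1) ≤ ν ∧ ν ≤ (n (l + 1)) ^ 2 - 1 ∧ (n (l + 1)) ^ 2 - 1 < n (l + 2) := by
  have hmono := strictMonoOn_Ici_one_of_sq_lt hn
  have hgap := coeff_ne_zero_gap_of_lacunary hmono hf2 l
  have hmN : n l < n (l + 1) := hmono (show 1 ≤ l from hl) (show 1 ≤ l + 1 by omega) (by omega)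
  have hM : n (l + 1) ^ 2 < n (l + 2) := hn (l + 1) (by omega)
  have hc : coeff (n (l + 1)) f ≠ 0 := hf1 (l + 1) (by omega) ▸ ha (l + 1) (by omega)
  obtain ⟨P, hP, hPdeg, hPord⟩ := hν.1
  have hupper : ν < n (l + 1) ^ 2 := by
    have := order_aeval_lt_sq hgap hmN hM.le hc hP (by omega)
    rwa [hPord, Nat.cast_lt] at this
  obtain ⟨Q, hQ, hQdeg, hQord⟩ :=
    exists_order_aeval_eq_of_gap hgap hmN ((Nat.le_self_pow two_ne_zero _).trans hM.le) hc
  have hlower : n (l + 1) ≤ ν := hν.2 ⟨Q, hQ, hQdeg.trans (max_le hd hd1), hQord⟩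
  omega
end

section
/- Consider a polynomial recurrence $a_{k+1}=Q(k,a_k,a_{k-1},\ldots,a_{k-r+1})$ where $Q(k,u_1,\ldots,u_r)=\sum_{|\beta|\le d_1} p_\beta(k) u^\beta$, the functions $p_\beta(k)=\sum_{i=0}^{d_2} c_{\beta,i}(1/k)^i$ have rational coefficients $c_{\beta,i}$, and the initial terms $a_0,\ldots,a_{r-1}$ are rational. Let $L_1$ be a common denominator of all the $c_{\beta,i}$ and $L_2$ a common denominator of $a_0,\ldots,a_{r-1}$. For $k\ge r-1$ let $D_k$ denote the minimal common denominator of $a_0,\ldots,a_k$. Then for all $k\ge r-1$, $D_k\le e^{M d_1^{k-r+1} k\log k}$, where $M=\max\left(\frac{\log L_2}{(r-1)\log(r-1)},\ d_2+\frac{\log L_1}{\log 2}\right)$ (assume $r\ge 3$ so that $(r-1)\log(r-1)>0$, and $d_1\ge 1$). -/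
/-!
If `a_0, …, a_k` all have denominators dividing `D`, then in `Q(k, a_k, …, a_{k-r+1})` each
coefficient `∑ c_{β,i} k^{-i}` has denominator dividing `L₁ k^{d₂}` and each monomial `u^β`
one dividing `D^{d₁}`, so `D_{k+1} ∣ L₁ k^{d₂} D_k^{d₁}`. Taking logarithms,
`log D_{k+1} ≤ log L₁ + d₂ log k + d₁ log D_k`, and the bound `log D_k ≤ M d₁^{k-(r-1)} k log k`
propagates by induction because `log L₁ + d₂ log k ≤ M log (k+1) ≤ M ((k+1) log (k+1) - k log k)`.
-/

open Finset Polynomial Real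

namespace Rat

lemma den_sum_dvd {ι : Type*} {s : Finset ι} {f : ι → ℚ} {n : ℕ}
    (h : ∀ i ∈ s, (f i).den ∣ n) : (∑ i ∈ s, f i).den ∣ n :=
  (Finset.Rat.den_sum_dvd_lcm_den s f).trans (Finset.lcm_dvd h)

lemma inv_natCast_den_dvd (k : ℕ) : ((k : ℚ)⁻¹).den ∣ k := by
  rw [inv_natCast_den]
  split_ifs with hk <;> simp [hk]

end Rat

lemma Polynomial.den_eval_inv_natCast_dvd {p : ℚ[X]} {d L : ℕ} (hdeg : p.natDegree ≤ d)
    (hden : ∀ i, (p.coeff i).den ∣ L) (k : ℕ) : (p.eval (k : ℚ)⁻¹).den ∣ L * k ^ d := by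
  rw [eval_eq_sum_range]
  refine Rat.den_sum_dvd fun i hi => (Rat.mul_den_dvd _ _).trans (mul_dvd_mul (hden i) ?_)
  rw [Rat.den_pow]
  exact (pow_dvd_pow_of_dvd (Rat.inv_natCast_den_dvd k) i).trans
    (pow_dvd_pow k (by rw [mem_range] at hi; omega))

lemma MvPolynomial.den_eval₂_dvd {R σ : Type*} [CommSemiring R] (f : R →+* ℚ)
    {Q : MvPolynomial σ R} {u : σ → ℚ} {L D d : ℕ} (hdeg : Q.totalDegree ≤ d)
    (hcoeff : ∀ β ∈ Q.support, (f (Q.coeff β)).den ∣ L) (hu : ∀ s, (u s).den ∣ D) :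
    (eval₂ f u Q).den ∣ L * D ^ d := by
  rw [eval₂_eq]
  refine Rat.den_sum_dvd fun β hβ => (Rat.mul_den_dvd _ _).trans (mul_dvd_mul (hcoeff β hβ) ?_)
  refine (Finset.Rat.den_prod_dvd_prod_den _ _).trans ?_
  calc ∏ s ∈ β.support, (u s ^ β s).den
      ∣ ∏ s ∈ β.support, D ^ β s :=
        prod_dvd_prod_of_dvd _ _ fun s _ => by rw [Rat.den_pow]; exact pow_dvd_pow_of_dvd (hu s) _
    _ = D ^ (β.sum fun _ e => e) := prod_pow_eq_pow_sum _ _ _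
    _ ∣ D ^ d := pow_dvd_pow D ((le_totalDegree hβ).trans hdeg)

lemma MvPolynomial.den_eval_map_evalRingHom_inv_natCast_dvd {σ : Type*}
    {Q : MvPolynomial σ ℚ[X]} {d₁ d₂ L D : ℕ} (hQdeg : Q.totalDegree ≤ d₁)
    (hpdeg : ∀ β ∈ Q.support, (Q.coeff β).natDegree ≤ d₂)
    (hden : ∀ β i, ((Q.coeff β).coeff i).den ∣ L) (k : ℕ) {u : σ → ℚ}
    (hu : ∀ s, (u s).den ∣ D) :
    (eval u (map (evalRingHom (k : ℚ)⁻¹) Q)).den ∣ L * k ^ d₂ * D ^ d₁ := by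
  rw [eval_map]
  exact den_eval₂_dvd _ hQdeg
    (fun β hβ => den_eval_inv_natCast_dvd (hpdeg β hβ) (hden β) k) hu

def denLcm (a : ℕ → ℚ) (k : ℕ) : ℕ := (range (k + 1)).lcm fun j => (a j).den

section denLcm

variable {a : ℕ → ℚ} {j k n : ℕ}

lemma denLcm_dvd_iff : denLcm a k ∣ n ↔ ∀ j ≤ k, (a j).den ∣ n := by
  simp only [denLcm, Finset.lcm_dvd_iff, mem_range, Nat.lt_succ_iff]

lemma den_dvd_denLcm (h : j ≤ k) : (a j).den ∣ denLcm a k :=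
  dvd_lcm (mem_range.2 (Nat.lt_succ_of_le h))

lemma denLcm_pos : 0 < denLcm a k :=
  Nat.pos_of_ne_zero fun h => by
    obtain ⟨j, -, hj⟩ := lcm_eq_zero_iff.1 h
    exact (a j).den_ne_zero hj

lemma denLcm_succ_dvd {d : ℕ} (hd : 1 ≤ d) (h : (a (k + 1)).den ∣ n * denLcm a k ^ d) :
    denLcm a (k + 1) ∣ n * denLcm a k ^ d := by
  refine denLcm_dvd_iff.2 fun j hj => ?_
  rcases Nat.of_le_succ hj with hj | rfl
  · exact (den_dvd_denLcm hj).trans ((dvd_pow_self _ (by omega)).trans (dvd_mul_left _ _))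
  · exact h

end denLcm

lemma add_mul_log_le_mul_log_add_one {A d M x : ℝ} (hA : 0 ≤ A) (hd : 0 ≤ d)
    (hM : d + A / log 2 ≤ M) (hx : 1 ≤ x) : A + d * log x ≤ M * log (x + 1) := by
  have hlog2 : 0 < log 2 := log_pos one_lt_two
  have hlog : log 2 ≤ log (x + 1) := log_le_log two_pos (by linarith)
  have hlogx : log x ≤ log (x + 1) := log_le_log (by linarith) (by linarith)
  calc A + d * log x ≤ A / log 2 * log (x + 1) + d * log (x + 1) := by
        gcongr
        rw [div_mul_eq_mul_div, le_div_iff₀ hlog2]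
        exact mul_le_mul_of_nonneg_left hlog hA
    _ = (d + A / log 2) * log (x + 1) := by ring
    _ ≤ M * log (x + 1) := mul_le_mul_of_nonneg_right hM (hlog2.le.trans hlog)

lemma log_add_one_le_mul_log_sub_mul_log {x : ℝ} (hx : 0 ≤ x) :
    log (x + 1) ≤ (x + 1) * log (x + 1) - x * log x := by
  rcases hx.eq_or_lt with rfl | hx
  · simp
  have : x * log x ≤ x * log (x + 1) :=
    mul_le_mul_of_nonneg_left (log_le_log hx (by linarith)) hx.le
  linarith

lemma le_mul_pow_mul_mul_log_of_le_add {x : ℕ → ℝ} {A d₁ d₂ M : ℝ} {k₀ : ℕ}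
    (hA : 0 ≤ A) (hd₁ : 1 ≤ d₁) (hd₂ : 0 ≤ d₂) (hM : d₂ + A / log 2 ≤ M) (hk₀ : 1 ≤ k₀)
    (hbase : x k₀ ≤ M * k₀ * log k₀)
    (hstep : ∀ k, k₀ ≤ k → x (k + 1) ≤ A + d₂ * log k + d₁ * x k) :
    ∀ k, k₀ ≤ k → x k ≤ M * d₁ ^ (k - k₀) * k * log k := by
  have hM0 : 0 ≤ M := le_trans (by positivity) hM
  intro k hk
  induction k, hk using Nat.le_induction with
  | base => simpa using hbase
  | succ k hk ih =>
    have hk1 : (1 : ℝ) ≤ k := by exact_mod_cast hk₀.trans hk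
    have hlog : 0 ≤ log (k + 1) := log_nonneg (by linarith)
    set X := M * d₁ ^ (k - k₀ + 1)
    have hMX : M ≤ X := le_mul_of_one_le_right hM0 (one_le_pow₀ hd₁)
    have hfirst : M * log (k + 1) ≤ X * ((k + 1) * log (k + 1) - k * log k) :=
      (mul_le_mul_of_nonneg_right hMX hlog).trans
        (mul_le_mul_of_nonneg_left (log_add_one_le_mul_log_sub_mul_log (by linarith))
          (hM0.trans hMX))
    calc x (k + 1) ≤ A + d₂ * log k + d₁ * x k := hstep k hk
      _ ≤ M * log (k + 1) + d₁ * (M * d₁ ^ (k - k₀) * k * log k) :=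
        add_le_add (add_mul_log_le_mul_log_add_one hA hd₂ hM hk1)
          (mul_le_mul_of_nonneg_left ih (by linarith))
      _ ≤ X * ((k + 1) * log (k + 1) - k * log k) + X * k * log k := by
        have hsecond : d₁ * (M * d₁ ^ (k - k₀) * k * log k) = X * k * log k := by ring
        linarith
      _ = M * d₁ ^ (k + 1 - k₀) * ↑(k + 1) * log ↑(k + 1) := by
        rw [Nat.sub_add_comm hk]
        push_cast
        ring

lemma log_le_of_dvd_mul_pow {n L k m d₁ d₂ : ℕ} (hL : 0 < L) (hk : 0 < k) (hm : 0 < m)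
    (h : n ∣ L * k ^ d₂ * m ^ d₁) : log n ≤ log L + d₂ * log k + d₁ * log m := by
  have hpos : 0 < L * k ^ d₂ * m ^ d₁ := by positivity
  calc log n ≤ log ↑(L * k ^ d₂ * m ^ d₁) :=
        log_le_log (by exact_mod_cast Nat.pos_of_dvd_of_pos h hpos)
          (by exact_mod_cast Nat.le_of_dvd hpos h)
    _ = log L + d₂ * log k + d₁ * log m := by
      push_cast
      rw [log_mul (by positivity) (by positivity), log_mul (by positivity) (by positivity),
        log_pow, log_pow]

/-- Denominator growth for polynomial recurrences `a_{k+1} = Q(k, a_k, …, a_{k-r+1})`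
with rational data: `D_k ≤ exp(M d₁^{k-r+1} k log k)`. Here `Q` is a polynomial of
degree `≤ d₁` in `u = (u_1, …, u_r)` whose coefficients are polynomials of degree
`≤ d₂` in `1/k`, `L₁` is a common denominator of all coefficients `c_{β,i}` of `Q`,
`L₂` a common denominator of the initial terms, and `D_k` the minimal common
denominator of `a_0, …, a_k`. -/
theorem stmt8 (r d₁ d₂ : ℕ) (hr : 3 ≤ r) (hd₁ : 1 ≤ d₁)
    (Q : MvPolynomial (Fin r) (Polynomial ℚ))
    (hQdeg : Q.totalDegree ≤ d₁)
    (hpdeg : ∀ β ∈ Q.support, (Q.coeff β).natDegree ≤ d₂)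
    (L₁ L₂ : ℕ) (hL₁ : 0 < L₁) (hL₂ : 0 < L₂)
    (hL₁den : ∀ β i, ((Q.coeff β).coeff i).den ∣ L₁)
    (a : ℕ → ℚ)
    (hL₂den : ∀ j < r, (a j).den ∣ L₂)
    (hrec : ∀ k : ℕ, r - 1 ≤ k →
      a (k + 1) = MvPolynomial.eval (fun s : Fin r => a (k - (s : ℕ)))
        (MvPolynomial.map (Polynomial.evalRingHom ((k : ℚ)⁻¹)) Q))
    (M : ℝ)
    (hM : M = max (Real.log L₂ / ((r - 1 : ℝ) * Real.log (r - 1 : ℝ)))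
      ((d₂ : ℝ) + Real.log L₁ / Real.log 2))
    (D : ℕ → ℕ)
    (hD : ∀ k, D k = (Finset.range (k + 1)).lcm fun j => (a j).den) :
    ∀ k : ℕ, r - 1 ≤ k →
      (D k : ℝ) ≤ Real.exp (M * (d₁ : ℝ) ^ (k - r + 1) * k * Real.log k) := by
  obtain rfl : D = denLcm a := funext hD
  have hM₂ : (d₂ : ℝ) + log L₁ / log 2 ≤ M := hM ▸ le_max_right _ _
  have hbase : log (denLcm a (r - 1)) ≤ M * ↑(r - 1) * log ↑(r - 1) := by
    have hdvd : denLcm a (r - 1) ∣ L₂ := denLcm_dvd_iff.2 fun j hj => hL₂den j (by omega)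
    have hr₁ : ((r - 1 : ℕ) : ℝ) = r - 1 := by push_cast [show 1 ≤ r by omega]; ring
    have hr₃ : (3 : ℝ) ≤ r := by exact_mod_cast hr
    have hpos : 0 < ((r : ℝ) - 1) * log (r - 1) :=
      mul_pos (by linarith) (log_pos (by linarith))
    calc log (denLcm a (r - 1)) ≤ log L₂ :=
          log_le_log (by exact_mod_cast denLcm_pos) (by exact_mod_cast Nat.le_of_dvd hL₂ hdvd)
      _ ≤ M * ↑(r - 1) * log ↑(r - 1) := by
        rw [hr₁, mul_assoc, ← div_le_iff₀ hpos, hM]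
        exact le_max_left _ _
  have hstep (k : ℕ) (hk : r - 1 ≤ k) : log (denLcm a (k + 1)) ≤
      log L₁ + d₂ * log k + d₁ * log (denLcm a k) := by
    refine log_le_of_dvd_mul_pow hL₁ (by omega) denLcm_pos (denLcm_succ_dvd hd₁ ?_)
    rw [hrec k hk]
    exact MvPolynomial.den_eval_map_evalRingHom_inv_natCast_dvd hQdeg hpdeg hL₁den k
      fun s => den_dvd_denLcm (Nat.sub_le k s)
  intro k hk
  have hlog := le_mul_pow_mul_mul_log_of_le_add (x := fun k => log (denLcm a k)) (log_nonneg (by exact_mod_cast hL₁))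
    (show (1 : ℝ) ≤ d₁ by exact_mod_cast hd₁) (Nat.cast_nonneg d₂) hM₂ (by omega) hbase hstep k hk
  calc (denLcm a k : ℝ) = exp (log (denLcm a k)) := (exp_log (by exact_mod_cast denLcm_pos)).symm
    _ ≤ exp (M * (d₁ : ℝ) ^ (k - (r - 1)) * k * log k) := exp_le_exp.2 hlog
    -- at `k = r - 1` the truncated exponent `k - r + 1` is `1`, not `0`
    _ ≤ exp (M * (d₁ : ℝ) ^ (k - r + 1) * k * log k) := by
      gcongr
      · exact le_trans (by positivity) hM₂
      · exact_mod_cast hd₁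
      · omega
end
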